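/- Let I be an ideal of Γ = F[x,y]/(x² + y⁴ − 1) invariant under the derivation D (D(x) = 2y³, D(y) = −x). If I contains a nonzero polynomial f(y) in the image of F[y], then I = Γ. -/

import Mathlib

set_option synthInstance.maxHeartbeats 400000

open MvPolynomial

/-- The derivation `D = 2y³ ∂/∂x − x ∂/∂y` of `F[x,y]`. -/
noncomputable def Dxy (F : Type*) [Field F] :
    Derivation F (MvPolynomial (Fin 2) F) (MvPolynomial (Fin 2) F) :=
  mkDerivation F ![2 * X 1 ^ 3, - X 0]

/-- The quotient ring `Γ = F[x,y]/(x² + y⁴ − 1)`. -/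
abbrev Gam (F : Type*) [Field F] : Type _ :=
  MvPolynomial (Fin 2) F ⧸
    Ideal.span {(X 0 ^ 2 + X 1 ^ 4 - 1 : MvPolynomial (Fin 2) F)}

/-!
For `h = y⁴ - 1` one has `x · D (p(y)) = (h p')(y)` and `-2 D² (p(y)) = (2 h p'' + h' p')(y)`, so
`J = {p ∈ F[y] | p(y) ∈ I}` is an ideal of `F[y]` stable under `p ↦ h p'` and
`p ↦ 2 h p'' + h' p'`. Write its generator as `g = c a` with `g' = c b` and `a, b` coprime.
The first stability forces `a ∣ h`, say `h = a e`; the second then gives `a ∣ 2 e b - h'`, hence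
`a ∣ 2 b - a'` because `a` and `e` are coprime (`h` is squarefree). Since `deg b = deg a - 1`
this means `a' = 2 b`, so `(c g)' = 0` and `g` is constant. As `f ∈ J`, `g ≠ 0` and `J = F[y]`.
-/

open Polynomial

theorem IsCoprime.dvd_of_mul_dvd_mul_mul {R : Type*} [CommRing R] [IsDomain R] {a b c p : R}
    (hab : IsCoprime a b) (hc : c ≠ 0) (h : c * a ∣ p * (c * b)) : a ∣ p := by
  rw [mul_left_comm] at h
  exact hab.dvd_of_dvd_mul_right ((mul_dvd_mul_iff_left hc).mp h)

namespace Polynomial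

variable {F : Type*} [Field F]

theorem dvd_two_mul_sub_derivative_of_squarefree {a e b : F[X]} (hae : Squarefree (a * e))
    (h : a ∣ 2 * e * b - derivative (a * e)) : a ∣ 2 * b - derivative a := by
  have hcop : IsCoprime a e := (squarefree_mul_iff.mp hae).1.isCoprime
  refine hcop.dvd_of_dvd_mul_left ?_
  have heq : e * (2 * b - derivative a) = (2 * e * b - derivative (a * e)) + a * derivative e := by
    rw [derivative_mul]; ring
  rw [heq]
  exact dvd_add h (dvd_mul_right a _)

variable [CharZero F]

theorem natDegree_mul_eq_zero_of_dvd_two_mul_sub_derivative {c a b : F[X]}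
    (hg : derivative (c * a) = c * b) (hdvd : a ∣ 2 * b - derivative a) :
    (c * a).natDegree = 0 := by
  by_contra hpos
  have hc : c ≠ 0 := by rintro rfl; simp at hpos
  have ha : a ≠ 0 := by rintro rfl; simp at hpos
  have hb : b ≠ 0 := by
    rintro rfl
    exact hpos (derivative_eq_zero.mp (by simpa using hg))
  have hdeg : a.natDegree = b.natDegree + 1 := by
    have h1 := natDegree_derivative (c * a)
    rw [hg, natDegree_mul hc hb, natDegree_mul hc ha] at h1
    rw [natDegree_mul hc ha] at hpos
    omega
  have hda : derivative a = 2 * b := by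
    refine (sub_eq_zero.mp (eq_zero_of_dvd_of_natDegree_lt hdvd ?_)).symm
    have htwo_b : (2 * b).natDegree ≤ b.natDegree := by
      simpa using natDegree_mul_le (p := (2 : F[X])) (q := b)
    have hda_le := natDegree_derivative_le a
    have := natDegree_sub_le (2 * b) (derivative a)
    omega
  have hconst : derivative (c * (c * a)) = 0 := by
    rw [derivative_mul, hg]
    rw [derivative_mul, hda] at hg
    linear_combination c * hg
  have := derivative_eq_zero.mp hconst
  rw [natDegree_mul hc (mul_ne_zero hc ha)] at this
  omega

theorem natDegree_eq_zero_of_dvd_mul_derivative {h g : F[X]} (hh : Squarefree h)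
    (h1 : g ∣ h * derivative g)
    (h2 : g ∣ 2 * h * derivative (derivative g) + derivative h * derivative g) :
    g.natDegree = 0 := by
  classical
  by_cases hg' : derivative g = 0
  · exact derivative_eq_zero.mp hg'
  obtain ⟨a, b, hga, hgb, hunit⟩ := extract_gcd g (derivative g)
  have hab : IsCoprime a b := (gcd_isUnit_iff a b).mp hunit
  have hc : gcd g (derivative g) ≠ 0 := gcd_ne_zero_of_right hg'
  generalize gcd g (derivative g) = c at hga hgb hc
  obtain ⟨e, he⟩ : a ∣ h := hab.dvd_of_mul_dvd_mul_mul hc (by rwa [← hga, ← hgb])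
  have hquot : h * derivative g = e * b * g := by rw [he, hgb, hga]; ring
  -- differentiating `h g' = e b g` turns `h2` into `g ∣ (2 e b - h') g'`
  have hdiff : 2 * h * derivative (derivative g) + derivative h * derivative g
      = 2 * derivative (e * b) * g + (2 * e * b - derivative h) * derivative g := by
    have := congrArg derivative hquot
    rw [derivative_mul, derivative_mul] at this
    linear_combination 2 * this
  have h3 : g ∣ (2 * e * b - derivative h) * derivative g := by
    rw [hdiff] at h2
    exact (dvd_add_right (dvd_mul_left g _)).mp h2
  have h4 : a ∣ 2 * e * b - derivative (a * e) :=
    hab.dvd_of_mul_dvd_mul_mul hc (by rwa [← hga, ← hgb, ← he])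
  rw [hga] at hgb ⊢
  exact natDegree_mul_eq_zero_of_dvd_two_mul_sub_derivative hgb
    (dvd_two_mul_sub_derivative_of_squarefree (he ▸ hh) h4)

theorem eq_bot_or_eq_top_of_derivative_mem {h : F[X]} (hh : Squarefree h) (J : Ideal F[X])
    (h1 : ∀ p ∈ J, h * derivative p ∈ J)
    (h2 : ∀ p ∈ J, 2 * h * derivative (derivative p) + derivative h * derivative p ∈ J) :
    J = ⊥ ∨ J = ⊤ := by
  obtain ⟨g, rfl⟩ := (IsPrincipalIdealRing.principal J).principal
  rcases eq_or_ne g 0 with rfl | hg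
  · exact Or.inl (Ideal.span_singleton_eq_bot.mpr rfl)
  refine Or.inr (Ideal.span_singleton_eq_top.mpr (isUnit_iff_degree_eq_zero.mpr ?_))
  have hgJ := Ideal.mem_span_singleton_self g
  rw [degree_eq_natDegree hg, natDegree_eq_zero_of_dvd_mul_derivative hh
    (Ideal.mem_span_singleton.mp (h1 g hgJ)) (Ideal.mem_span_singleton.mp (h2 g hgJ))]
  rfl

end Polynomial

section

variable {R A : Type*} [CommRing R] [CommRing A] [Algebra R A] {D : Derivation R A A} {t x : A}
  {h : R[X]} {I : Ideal A}

theorem aeval_mul_derivative_mem (hx : x ^ 2 = -aeval t h) (hDt : D t = -x)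
    (hI : ∀ a ∈ I, D a ∈ I) {p : R[X]} (hp : aeval t p ∈ I) :
    aeval t (h * derivative p) ∈ I := by
  have key : aeval t (h * derivative p) = x * D (aeval t p) := by
    rw [Derivation.map_aeval, hDt, smul_eq_mul, map_mul]
    linear_combination aeval t (derivative p) * hx
  rw [key]
  exact I.mul_mem_left x (hI _ hp)

theorem aeval_two_mul_derivative_derivative_add_mem (hx : x ^ 2 = -aeval t h) (hDt : D t = -x)
    (hDx : 2 * D x = aeval t (derivative h)) (hI : ∀ a ∈ I, D a ∈ I) {p : R[X]}
    (hp : aeval t p ∈ I) :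
    aeval t (2 * h * derivative (derivative p) + derivative h * derivative p) ∈ I := by
  have key : aeval t (2 * h * derivative (derivative p) + derivative h * derivative p)
      = -2 * D (D (aeval t p)) := by
    simp only [Derivation.map_aeval, hDt, smul_eq_mul, Derivation.leibniz, map_neg, map_add,
      map_mul, map_ofNat]
    linear_combination 2 * aeval t (derivative (derivative p)) * hx
      - aeval t (derivative p) * hDx
  rw [key]
  exact I.mul_mem_left _ (hI _ (hI _ hp))

end

theorem Dxy_X_zero (F : Type*) [Field F] : Dxy F (X 0) = 2 * X 1 ^ 3 := by
  simp [Dxy, MvPolynomial.mkDerivation_X]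

theorem Dxy_X_one (F : Type*) [Field F] : Dxy F (X 1) = -X 0 := by
  simp [Dxy, MvPolynomial.mkDerivation_X]

theorem Gam.mk_X_zero_sq (F : Type*) [Field F] :
    (Ideal.Quotient.mk _ (X 0) : Gam F) ^ 2 =
      -Polynomial.aeval (Ideal.Quotient.mk _ (X 1) : Gam F) (Polynomial.X ^ 4 - 1 : F[X]) := by
  have hrel : (Ideal.Quotient.mk _ (X 0 ^ 2 + X 1 ^ 4 - 1) : Gam F) = 0 :=
    Ideal.Quotient.eq_zero_iff_mem.mpr (Ideal.mem_span_singleton_self _)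
  simp only [map_sub, map_add, map_pow, map_one, Polynomial.aeval_X] at hrel ⊢
  linear_combination hrel

theorem squarefree_X_pow_sub_one {F : Type*} [Field F] [CharZero F] {n : ℕ} (hn : n ≠ 0) :
    Squarefree (Polynomial.X ^ n - 1 : F[X]) := by
  simpa using (separable_X_pow_sub_C (1 : F) (Nat.cast_ne_zero.mpr hn) one_ne_zero).squarefree

theorem stmt5 (F : Type*) [Field F] [CharZero F]
    (D' : Derivation F (Gam F) (Gam F))
    (hD' : ∀ p : MvPolynomial (Fin 2) F,
      D' (Ideal.Quotient.mk _ p) = Ideal.Quotient.mk _ (Dxy F p))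
    (I : Ideal (Gam F)) (hinv : ∀ a ∈ I, D' a ∈ I)
    (f : Polynomial F) (hf : f ≠ 0)
    (hfI : Polynomial.aeval (Ideal.Quotient.mk _ (X 1) : Gam F) f ∈ I) :
    I = ⊤ := by
  set t : Gam F := Ideal.Quotient.mk _ (X 1)
  set x : Gam F := Ideal.Quotient.mk _ (X 0)
  have hx := Gam.mk_X_zero_sq F
  have hDt : D' t = -x := by rw [hD', Dxy_X_one, map_neg]
  have hDx : 2 * D' x = Polynomial.aeval t (derivative (Polynomial.X ^ 4 - 1 : F[X])) := by
    rw [hD', Dxy_X_zero]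
    simp only [t, map_mul, map_pow, map_ofNat, derivative_X_pow, derivative_one,
      map_sub, map_natCast, Polynomial.aeval_X, map_zero]
    ring
  rcases eq_bot_or_eq_top_of_derivative_mem (squarefree_X_pow_sub_one four_ne_zero)
      (I.comap (Polynomial.aeval t))
      (fun p hp ↦ aeval_mul_derivative_mem hx hDt hinv hp)
      (fun p hp ↦ aeval_two_mul_derivative_derivative_add_mem hx hDt hDx hinv hp) with hJ | hJ
  · exact absurd ((Submodule.eq_bot_iff _).mp hJ f hfI) hf
  · exact (Ideal.eq_top_iff_one I).mpr (by simpa using (Ideal.eq_top_iff_one _).mp hJ)
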